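/- arXiv:2406.04223 — 5 statements merged into one kernel-verified Lean document; each statement's English description precedes it below -/
import Mathlib

section
/- The transpose J^T_Q of the Jacobian matrix of the maximal minors F_1,…,F_{n+1} of the n×(n+1) generic matrix X has rank n+1 over Q; that is, some (n+1)×(n+1) minor of the (n+1)×n(n+1) matrix with (i,(j,k))-entry ∂F_i/∂x_{j,k} is nonzero. -/
open MvPolynomial Matrix Finset


variable {k : Type} [Field k] {σ : Type*} [DecidableEq σ]

theorem pderiv_prod {ι : Type*} [DecidableEq ι] (c : σ) (s : Finset ι)
    (f : ι → MvPolynomial σ k) :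
    pderiv c (∏ i ∈ s, f i) = ∑ i ∈ s, pderiv c (f i) * ∏ j ∈ s.erase i, f j := by
  induction s using Finset.induction with
  | empty => simp
  | @insert a s ha ih =>
    rw [Finset.prod_insert ha, pderiv_mul, ih, Finset.mul_sum, Finset.sum_insert ha,
      Finset.erase_insert ha]
    congr 1
    refine Finset.sum_congr rfl fun i hi => ?_
    rw [Finset.erase_insert_of_ne (by rintro rfl; exact ha hi),
      Finset.prod_insert (fun hmem => ha (Finset.mem_of_mem_erase hmem))]
    ring

theorem pderiv_det {m : ℕ} (c : σ) (M : Matrix (Fin m) (Fin m) (MvPolynomial σ k)) :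
    pderiv c M.det = ∑ t, (M.updateCol t fun i => pderiv c (M i t)).det := by
  simp only [Matrix.det_apply]
  rw [map_sum, Finset.sum_comm]
  refine Finset.sum_congr rfl fun g _ => ?_
  rw [Units.smul_def, map_zsmul, pderiv_prod, ← Units.smul_def, Finset.smul_sum]
  refine Finset.sum_congr rfl fun t _ => ?_
  congr 1
  rw [← Finset.mul_prod_erase Finset.univ _ (Finset.mem_univ t),
    Matrix.updateCol_apply, if_pos rfl]
  congr 1
  exact Finset.prod_congr rfl fun i hi => by
    rw [Matrix.updateCol_apply, if_neg (Finset.ne_of_mem_erase hi)]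

noncomputable section

/-- The generic `n × (n+1)` matrix of indeterminates. -/
def genX (k : Type) [Field k] (n : ℕ) :
    Matrix (Fin n) (Fin (n + 1)) (MvPolynomial (Fin n × Fin (n + 1)) k) :=
  Matrix.of fun i j => MvPolynomial.X (i, j)

/-- `Fm k n r` is the maximal minor of the generic matrix obtained by deleting column `r`. -/
def Fm (k : Type) [Field k] (n : ℕ) (r : Fin (n + 1)) :
    MvPolynomial (Fin n × Fin (n + 1)) k :=
  Matrix.det (Matrix.of fun i j : Fin n => genX k n i (r.succAbove j))

/-- The transposed Jacobian matrix of the maximal minors. -/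
def JQ (k : Type) [Field k] (n : ℕ) :
    Matrix (Fin (n + 1)) (Fin n × Fin (n + 1)) (MvPolynomial (Fin n × Fin (n + 1)) k) :=
  Matrix.of fun i jk => MvPolynomial.pderiv jk (Fm k n i)


variable {n : ℕ}

theorem pderiv_Fm_self (p : Fin n) (r : Fin (n + 1)) :
    pderiv (p, r) (Fm k n r) = 0 := by
  rw [Fm, pderiv_det]
  refine Finset.sum_eq_zero fun t _ => ?_
  refine Matrix.det_eq_zero_of_column_eq_zero t fun i => ?_
  rw [Matrix.updateCol_self, Matrix.of_apply, genX, Matrix.of_apply,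
    pderiv_X_of_ne (by simp [Fin.succAbove_ne r t])]

theorem pderiv_Fm_eq (p : Fin n) (r : Fin (n + 1)) (t0 : Fin n) :
    pderiv (p, r.succAbove t0) (Fm k n r) =
      Matrix.det (Matrix.updateCol (Matrix.of fun i j : Fin n => genX k n i (r.succAbove j))
        t0 fun i => if i = p then 1 else 0) := by
  rw [Fm, pderiv_det]
  rw [Finset.sum_eq_single t0]
  · refine congrArg Matrix.det (congrArg _ (funext fun i => ?_))
    rw [Matrix.of_apply, genX, Matrix.of_apply, pderiv_X]
    by_cases h : i = p
    · subst h; simp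
    · rw [Pi.single_eq_of_ne (by simp [h]), if_neg h]
  · intro t _ ht
    refine Matrix.det_eq_zero_of_column_eq_zero t fun i => ?_
    rw [Matrix.updateCol_self, Matrix.of_apply, genX, Matrix.of_apply,
      pderiv_X_of_ne (by simp [(Fin.succAbove_right_injective (p := r)).ne ht])]
  · simp

def ptA (k : Type) [Field k] (n : ℕ) : Fin n × Fin (n + 1) → k :=
  fun pq => if (pq.2 : ℕ) = n ∨ (pq.1 : ℕ) = (pq.2 : ℕ) then 1 else 0

theorem eval_pderiv_Fm (p : Fin n) (r : Fin (n + 1)) (t0 : Fin n) :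
    eval (ptA k n) (pderiv (p, r.succAbove t0) (Fm k n r)) =
      Matrix.det (Matrix.of fun i j : Fin n =>
        if j = t0 then (if i = p then (1 : k) else 0) else ptA k n (i, r.succAbove j)) := by
  rw [pderiv_Fm_eq, RingHom.map_det]
  congr 1
  ext i j
  rw [RingHom.mapMatrix_apply, Matrix.map_apply, Matrix.updateCol_apply, Matrix.of_apply]
  by_cases h : j = t0
  · simp [h, apply_ite (eval (ptA k n))]
  · simp [h, genX]

-- corner entry
theorem corner (hn0 : 0 < n) :
    eval (ptA k n) (JQ k n (Fin.last n) (⟨0, hn0⟩, ⟨0, Nat.lt_succ_of_lt hn0⟩)) = 1 := by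
  have h0 : (⟨0, Nat.lt_succ_of_lt hn0⟩ : Fin (n + 1)) = (Fin.last n).succAbove ⟨0, hn0⟩ := by
    rw [Fin.succAbove_last]; rfl
  rw [JQ, Matrix.of_apply, h0, eval_pderiv_Fm]
  have : (Matrix.of fun i j : Fin n =>
      if j = (⟨0, hn0⟩ : Fin n) then (if i = (⟨0, hn0⟩ : Fin n) then (1 : k) else 0)
      else ptA k n (i, (Fin.last n).succAbove j)) = (1 : Matrix (Fin n) (Fin n) k) := by
    ext i j
    rw [Matrix.of_apply, Matrix.one_apply]
    by_cases h : j = (⟨0, hn0⟩ : Fin n)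
    · subst h
      simp [Fin.ext_iff]
    · rw [if_neg h, Fin.succAbove_last, ptA]
      by_cases hij : i = j
      · subst hij; simp
      · rw [if_neg (by push_neg; exact ⟨Nat.ne_of_lt j.isLt, by simpa [Fin.ext_iff] using hij⟩),
          if_neg hij]
  rw [this, Matrix.det_one]

theorem succAbove_castSucc_last (hn0 : 0 < n) (i' : Fin n) :
    (Fin.castSucc i').succAbove ⟨n - 1, by omega⟩ = Fin.last n := by
  rw [Fin.succAbove_of_le_castSucc]
  · exact Fin.ext (by simp [Fin.val_succ, Fin.last]; omega)
  · rw [Fin.le_def]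
    simp only [Fin.coe_castSucc]
    have := i'.isLt; omega

theorem offdiag (hn0 : 0 < n) (i' j' : Fin n) (hij : i' ≠ j') :
    eval (ptA k n) (JQ k n (Fin.castSucc i') (j', Fin.last n)) = 0 := by
  rw [JQ, Matrix.of_apply, ← succAbove_castSucc_last hn0 i', eval_pderiv_Fm]
  set t0 : Fin n := ⟨n - 1, by omega⟩ with ht0
  obtain ⟨col1, hcol1⟩ := Fin.exists_succAbove_eq
    (show Fin.castSucc j' ≠ Fin.castSucc i' from fun hc => (Ne.symm hij) (Fin.castSucc_inj.mp hc))
  have hc1t0 : col1 ≠ t0 := by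
    intro h
    rw [h, succAbove_castSucc_last hn0 i'] at hcol1
    have := congrArg Fin.val hcol1
    simp [Fin.last] at this
    omega
  refine Matrix.det_zero_of_column_eq (Ne.symm hc1t0) fun row => ?_
  rw [Matrix.of_apply, Matrix.of_apply, if_pos rfl, if_neg hc1t0, hcol1, ptA]
  by_cases h : row = j'
  · subst h; simp
  · rw [if_neg h, if_neg (by
      push_neg
      exact ⟨by simpa using Nat.ne_of_lt j'.isLt, by simpa [Fin.ext_iff] using h⟩)]

theorem diag (hn0 : 0 < n) (i' : Fin n) :
    eval (ptA k n) (JQ k n (Fin.castSucc i') (i', Fin.last n)) ≠ 0 := by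
  rw [JQ, Matrix.of_apply, ← succAbove_castSucc_last hn0 i', eval_pderiv_Fm]
  set r := Fin.castSucc i' with hr
  set t0 : Fin n := ⟨n - 1, by omega⟩ with ht0
  have hval : ∀ col : Fin n, col ≠ t0 → ((r.succAbove col : ℕ)) < n := by
    intro col h
    have h1 : r.succAbove col ≠ Fin.last n := by
      rw [← succAbove_castSucc_last hn0 i']
      exact fun hc => h (Fin.succAbove_right_injective hc)
    have h2 : ((r.succAbove col : ℕ)) ≠ n := fun hc => h1 (Fin.ext (by simp [Fin.last, hc]))
    have := (r.succAbove col).isLt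
    omega
  let g : Fin n → Fin n := fun col => if h : col = t0 then i' else ⟨(r.succAbove col : ℕ), hval col h⟩
  have hg : ∀ col, col ≠ t0 → (g col : ℕ) = (r.succAbove col : ℕ) := fun col h => by
    simp only [g, dif_neg h]
  have hgt0 : g t0 = i' := by simp [g]
  have ginj : Function.Injective g := by
    intro x y hxy
    by_cases hx : x = t0 <;> by_cases hy : y = t0
    · rw [hx, hy]
    · exfalso
      rw [hx, hgt0] at hxy
      have : r.succAbove y = r := Fin.ext (by rw [← hg y hy, ← hxy]; simp [hr])
      exact Fin.succAbove_ne r y this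
    · exfalso
      rw [hy, hgt0] at hxy
      have : r.succAbove x = r := Fin.ext (by rw [← hg x hx, hxy]; simp [hr])
      exact Fin.succAbove_ne r x this
    · exact Fin.succAbove_right_injective (p := r) (Fin.ext (by rw [← hg x hx, ← hg y hy, hxy]))
  let gE : Equiv.Perm (Fin n) := Equiv.ofBijective g (Finite.injective_iff_bijective.mp ginj)
  have hgE : ∀ c, gE c = g c := fun c => rfl
  have hB : (Matrix.of fun row col : Fin n =>
      if col = t0 then (if row = i' then (1 : k) else 0) else ptA k n (row, r.succAbove col))
      = (Equiv.toPEquiv gE.symm).toMatrix := by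
    ext row col
    have hperm : (Equiv.toPEquiv gE.symm).toMatrix row col = if row = gE col then (1 : k) else 0 := by
      rw [PEquiv.toMatrix_apply, Equiv.toPEquiv_apply]
      exact if_congr ⟨fun h => by
          rw [Option.mem_some_iff] at h
          rw [← h, Equiv.apply_symm_apply],
        fun h => by
          rw [h, Equiv.symm_apply_apply]
          exact Option.mem_some_iff.mpr rfl⟩ rfl rfl
    rw [Matrix.of_apply, hperm, hgE]
    by_cases hc : col = t0
    · subst hc; rw [hgt0, if_pos rfl]
    · rw [if_neg hc, ptA]
      refine if_congr ?_ rfl rfl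
      rw [or_iff_right (by simpa using Nat.ne_of_lt (hval col hc)), Fin.ext_iff, hg col hc]
  rw [hB, Matrix.det_permutation]
  rcases Int.units_eq_one_or (Equiv.Perm.sign gE.symm) with h | h <;> rw [h] <;> simp

theorem stmt6 (k : Type) [Field k] (n : ℕ) (hn : 2 ≤ n) :
    ∃ cols : Fin (n + 1) → Fin n × Fin (n + 1), Function.Injective cols ∧
      Matrix.det (Matrix.of fun i j : Fin (n + 1) => JQ k n i (cols j)) ≠ 0 := by
  have hn0 : 0 < n := by omega
  set cols : Fin (n + 1) → Fin n × Fin (n + 1) := fun j =>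
    if h : (j : ℕ) < n then (⟨j, h⟩, Fin.last n)
    else (⟨0, hn0⟩, ⟨0, Nat.lt_succ_of_lt hn0⟩) with hcolsdef
  refine ⟨cols, ?_, ?_⟩
  · intro j1 j2 h
    by_cases h1 : (j1 : ℕ) < n <;> by_cases h2 : (j2 : ℕ) < n
    · rw [hcolsdef] at h
      simp only [dif_pos h1, dif_pos h2, Prod.mk.injEq] at h
      exact Fin.ext (by simpa [Fin.ext_iff] using h.1)
    · exfalso
      rw [hcolsdef] at h
      simp only [dif_pos h1, dif_neg h2, Prod.mk.injEq] at h
      have := congrArg Fin.val h.2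
      simp [Fin.val_last] at this
      omega
    · exfalso
      rw [hcolsdef] at h
      simp only [dif_neg h1, dif_pos h2, Prod.mk.injEq] at h
      have := congrArg Fin.val h.2
      simp [Fin.val_last] at this
      omega
    · have hj1 := j1.isLt
      have hj2 := j2.isLt
      exact Fin.ext (by omega)
  · have key : Matrix.det (Matrix.of fun i j : Fin (n + 1) =>
        eval (ptA k n) (JQ k n i (cols j))) ≠ 0 := by
      set N : Matrix (Fin (n + 1)) (Fin (n + 1)) k :=
        Matrix.of fun i j : Fin (n + 1) => eval (ptA k n) (JQ k n i (cols j)) with hN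
      rw [Matrix.det_succ_row N (Fin.last n)]
      rw [Finset.sum_eq_single (Fin.last n) (fun j _ hj => ?_) (by simp)]
      · have hcorner : N (Fin.last n) (Fin.last n) = 1 := by
          show eval (ptA k n) (JQ k n (Fin.last n) (cols (Fin.last n))) = 1
          have hc : cols (Fin.last n) = (⟨0, hn0⟩, ⟨0, Nat.lt_succ_of_lt hn0⟩) := by
            rw [hcolsdef]
            exact dif_neg (by simp [Fin.val_last])
          rw [hc]
          exact corner hn0
        rw [hcorner, mul_one]
        have hsub : N.submatrix (Fin.last n).succAbove (Fin.last n).succAbove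
            = Matrix.diagonal
              (fun i' : Fin n => eval (ptA k n) (JQ k n (Fin.castSucc i') (i', Fin.last n))) := by
          ext i' j'
          rw [Matrix.submatrix_apply, Fin.succAbove_last]
          have hcolsc : cols (Fin.castSucc j') = (j', Fin.last n) := by
            have h : ((Fin.castSucc j' : Fin (n + 1)) : ℕ) < n := by simpa using j'.isLt
            have e1 : cols (Fin.castSucc j')
                = (⟨((Fin.castSucc j' : Fin (n + 1)) : ℕ), h⟩, Fin.last n) := dif_pos h
            rw [e1]
            congr 1
          by_cases hij : i' = j'
          · subst hij
            rw [Matrix.diagonal_apply_eq]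
            show eval (ptA k n) (JQ k n (Fin.castSucc i') (cols (Fin.castSucc i'))) = _
            rw [hcolsc]
          · rw [Matrix.diagonal_apply_ne _ hij]
            show eval (ptA k n) (JQ k n (Fin.castSucc i') (cols (Fin.castSucc j'))) = 0
            rw [hcolsc]
            exact offdiag hn0 i' j' hij
        rw [hsub, Matrix.det_diagonal]
        refine mul_ne_zero (pow_ne_zero _ (neg_ne_zero.mpr one_ne_zero)) ?_
        rw [Finset.prod_ne_zero_iff]
        exact fun i' _ => diag hn0 i'
      · have hjn : (j : ℕ) < n := by
          have h1 := j.isLt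
          have h2 : (j : ℕ) ≠ n := fun hc => hj (Fin.ext (by simp [Fin.val_last, hc]))
          omega
        have hz : N (Fin.last n) j = 0 := by
          show eval (ptA k n) (JQ k n (Fin.last n) (cols j)) = 0
          have hc : cols j = (⟨j, hjn⟩, Fin.last n) := by rw [hcolsdef]; exact dif_pos hjn
          rw [hc, JQ, Matrix.of_apply, pderiv_Fm_self, map_zero]
        rw [hz]
        ring
    intro hdet
    apply key
    have := congrArg (eval (ptA k n)) hdet
    rw [RingHom.map_det, map_zero] at this
    rw [← this]
    congr 1
end
end

section
/- The matrix ∂_2 : Q^{(n−1)(n+1)} → Q^{n(n+1)} has full rank (n−1)(n+1), i.e., it admits a nonzero maximal minor of size (n−1)(n+1). -/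
open MvPolynomial Matrix Finset

noncomputable section

/-- Column index type for the matrix `∂₂`: for each block `k : Fin n` the `n - 1` columns of
`A_k` (indexed by the rows `c ≠ k` of `X` giving the remaining columns of `Xᵀ`), followed by
the columns `B_ℓ` for `ℓ ≠ 1` (zero-indexed: `ℓ ≠ 0`). -/
abbrev ColIdx (n : ℕ) : Type :=
  (Σ _kk : Fin n, {c : Fin n // c ≠ _kk}) ⊕ {l : Fin n // (l : ℕ) ≠ 0}

/-- The matrix `∂₂`, built block-diagonally from the `A_k` together with the columns `B_ℓ`. -/
def d2 (k : Type) [Field k] (n : ℕ) :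
    Matrix (Fin n × Fin (n + 1)) (ColIdx n) (MvPolynomial (Fin n × Fin (n + 1)) k) :=
  Matrix.of fun js cidx =>
    match js, cidx with
    | (j, s), Sum.inl ⟨kk, c⟩ => if j = kk then genX k n c.1 s else 0
    | (j, s), Sum.inr ⟨l, _⟩ =>
        (if j = l then genX k n l s else 0) - (if (j : ℕ) = 0 then genX k n j s else 0)

theorem stmt11 (k : Type) [Field k] (n : ℕ) (hn : 2 ≤ n) :
    ∃ rows : ColIdx n → Fin n × Fin (n + 1), Function.Injective rows ∧
      Matrix.det (Matrix.of fun c c' : ColIdx n => d2 k n (rows c) c') ≠ 0 := by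
  classical
  set rows : ColIdx n → Fin n × Fin (n + 1) := fun c =>
    match c with
    | Sum.inl ⟨kk, c⟩ => (kk, c.1.castSucc)
    | Sum.inr ⟨l, _⟩ => (l, l.castSucc) with hrows
  refine ⟨rows, ?_, ?_⟩
  · rintro (⟨kk, c, hc⟩ | ⟨l, hl⟩) (⟨kk', c', hc'⟩ | ⟨l', hl'⟩) h <;>
      simp only [hrows, Prod.mk.injEq, Fin.castSucc_inj] at h
    · obtain ⟨h1, h2⟩ := h; subst h1; subst h2; rfl
    · exact absurd h.2 (by simp [h.1] at hc ⊢; exact hc)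
    · exact absurd h.2.symm (by rw [← h.1] at hc'; exact hc')
    · obtain ⟨h1, _⟩ := h; subst h1; rfl
  · set φ : MvPolynomial (Fin n × Fin (n + 1)) k →+* k :=
      (MvPolynomial.aeval
        (fun p : Fin n × Fin (n + 1) => if (p.2 : ℕ) = (p.1 : ℕ) then (1 : k) else 0)).toRingHom
      with hφ
    intro hdet
    have hmap : (Matrix.of fun c c' : ColIdx n => d2 k n (rows c) c').map φ = 1 := by
      ext c c'
      have hφX : ∀ i : Fin n, ∀ s : Fin (n + 1),
          φ (MvPolynomial.X (σ := Fin n × Fin (n + 1)) (R := k) (i, s)) =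
            if (s : ℕ) = (i : ℕ) then 1 else 0 := by
        intro i s; simp [hφ]
      rcases c with ⟨kk, c, hc⟩ | ⟨l, hl⟩ <;> rcases c' with ⟨kk', c', hc'⟩ | ⟨l', hl'⟩ <;>
        simp only [Matrix.map_apply, Matrix.of_apply, hrows, d2, genX, Matrix.one_apply,
          Sum.inl.injEq, Sum.inr.injEq, Sigma.mk.inj_iff, Subtype.mk.injEq] <;>
        simp only [map_sub, apply_ite φ, map_zero, hφX, Fin.coe_castSucc]
      · by_cases h1 : kk = kk' <;> by_cases h2 : (c : ℕ) = (c' : ℕ)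
        · have hcc : c = c' := Fin.val_injective h2
          subst h1; subst hcc
          simp [h2, heq_eq_eq]
        · subst h1
          have hcc : ¬ c = c' := fun hcc => h2 (congrArg Fin.val hcc)
          simp [h2, heq_eq_eq, Subtype.ext_iff, hcc]
        · simp [h1]
        · simp [h1]
      · -- row (kk, c.castSucc), column B_{l'} : should be 0
        have h1 : ¬ ((c : ℕ) = (l' : ℕ) ∧ kk = l') := by
          rintro ⟨ha, hb⟩
          exact hc (by subst hb; exact Fin.val_injective ha)
        have h2 : ¬ ((c : ℕ) = 0 ∧ (kk : ℕ) = 0) := by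
          rintro ⟨ha, hb⟩
          exact hc (Fin.val_injective (ha.trans hb.symm))
        by_cases hkl : kk = l' <;> by_cases hk0 : (kk : ℕ) = 0 <;>
          simp_all <;> omega
      · -- row (l, l.castSucc), column inl (kk', c') : should be 0
        have : ¬ ((l : ℕ) = (c' : ℕ) ∧ l = kk') := by
          rintro ⟨ha, hb⟩
          exact hc' (by subst hb; exact (Fin.val_injective ha).symm)
        by_cases hkl : l = kk' <;> simp_all
      · -- row (l, l.castSucc), column B_{l'}
        by_cases hll : l = l'
        · subst hll; simp [hl]
        · have : ¬ (l : ℕ) = (l' : ℕ) := fun h => hll (Fin.val_injective h)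
          simp [hll, this, hl, Subtype.ext_iff]
    have : φ (Matrix.det (Matrix.of fun c c' : ColIdx n => d2 k n (rows c) c')) = 1 := by
      rw [RingHom.map_det, RingHom.mapMatrix_apply, hmap, Matrix.det_one]
    rw [hdet, map_zero] at this
    exact zero_ne_one this
end
end

section
/- As Q-modules, coker J^T_Q ≅ coker J^T_R, where R = Q/I_n and J^T_R = J^T_Q ⊗_Q R. Equivalently, each column F_j·e_i (for i,j ∈ {1,…,n+1}) of standard basis vectors scaled by the maximal minors lies in the Q-column span of J^T_Q; explicitly, for i ≠ j one has Σ_{k=1}^{n} x_{k,i} b_{k,j} = (−1)^{i+j+1} F_j e_i, where b_{k,j} is the column of J^T_Q corresponding to ∂/∂x_{k,j}. -/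
open MvPolynomial Matrix Finset

set_option synthInstance.maxHeartbeats 1000000
set_option maxHeartbeats 1000000

noncomputable section

/-- The determinantal ideal `I_n` generated by the maximal minors. -/
def In (k : Type) [Field k] (n : ℕ) : Ideal (MvPolynomial (Fin n × Fin (n + 1)) k) :=
  Ideal.span (Set.range (Fm k n))

/-- The determinantal ring `R = Q / I_n`. -/
abbrev Rring (k : Type) [Field k] (n : ℕ) : Type :=
  MvPolynomial (Fin n × Fin (n + 1)) k ⧸ In k n

/-- The transposed Jacobian with entries reduced to `R`. -/
def JR (k : Type) [Field k] (n : ℕ) :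
    Matrix (Fin (n + 1)) (Fin n × Fin (n + 1)) (Rring k n) :=
  (JQ k n).map (algebraMap (MvPolynomial (Fin n × Fin (n + 1)) k) (Rring k n))

lemma derivation_sum_apply {R A : Type*} [CommRing R] [CommRing A] [Algebra R A]
    {ι : Type*} (s : Finset ι) (f : ι → Derivation R A A) (a : A) :
    (∑ i ∈ s, f i) a = ∑ i ∈ s, f i a := by
  induction s using Finset.cons_induction with
  | empty => simp
  | cons b s hb ih => rw [Finset.sum_cons, Finset.sum_cons, Derivation.add_apply, ih]

lemma derivation_map_prod {R A : Type*} [CommRing R] [CommRing A] [Algebra R A]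
    (D : Derivation R A A) {ι : Type*} [DecidableEq ι] (s : Finset ι) (f : ι → A) :
    D (∏ i ∈ s, f i) = ∑ i ∈ s, (∏ j ∈ s.erase i, f j) * D (f i) := by
  induction s using Finset.induction_on with
  | empty => simp
  | @insert a s ha ih =>
    rw [Finset.prod_insert ha, D.leibniz, ih, Finset.sum_insert ha, Finset.erase_insert ha,
      smul_eq_mul, smul_eq_mul, Finset.mul_sum, add_comm]
    congr 1
    refine Finset.sum_congr rfl fun i hi => ?_
    have hia : a ≠ i := fun h => ha (h ▸ hi)
    rw [Finset.erase_insert_of_ne hia, Finset.prod_insert (by simp [ha]), mul_assoc]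

lemma deriv_det {R A : Type*} [CommRing R] [CommRing A] [Algebra R A]
    (D : Derivation R A A) {m : ℕ} (M : Matrix (Fin m) (Fin m) A) :
    D M.det = ∑ c : Fin m, (M.updateCol c (fun a => D (M a c))).det := by
  have hz : ∀ (u : ℤ) (x : A), D ((u : A) * x) = (u : A) * D x := fun u x => by
    rw [← zsmul_eq_mul, map_zsmul, zsmul_eq_mul]
  rw [Matrix.det_apply', map_sum]
  have lhs : ∀ σ : Equiv.Perm (Fin m),
      D (((Equiv.Perm.sign σ : ℤ) : A) * ∏ i, M (σ i) i) =
        ∑ c : Fin m, ((Equiv.Perm.sign σ : ℤ) : A) *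
          ((∏ i ∈ Finset.univ.erase c, M (σ i) i) * D (M (σ c) c)) := by
    intro σ
    rw [hz, derivation_map_prod, Finset.mul_sum]
  calc (∑ σ : Equiv.Perm (Fin m), D (((Equiv.Perm.sign σ : ℤ) : A) * ∏ i, M (σ i) i))
      = ∑ σ : Equiv.Perm (Fin m), ∑ c : Fin m, ((Equiv.Perm.sign σ : ℤ) : A) *
          ((∏ i ∈ Finset.univ.erase c, M (σ i) i) * D (M (σ c) c)) :=
        Finset.sum_congr rfl fun σ _ => lhs σ
    _ = ∑ c : Fin m, ∑ σ : Equiv.Perm (Fin m), ((Equiv.Perm.sign σ : ℤ) : A) *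
          ((∏ i ∈ Finset.univ.erase c, M (σ i) i) * D (M (σ c) c)) := Finset.sum_comm
    _ = ∑ c : Fin m, (M.updateCol c (fun a => D (M a c))).det := by
        refine Finset.sum_congr rfl fun c _ => ?_
        rw [Matrix.det_apply']
        refine Finset.sum_congr rfl fun σ _ => ?_
        congr 1
        rw [← Finset.mul_prod_erase Finset.univ _ (Finset.mem_univ c), Matrix.updateCol_self]
        rw [Finset.prod_congr rfl fun i hi =>
          Matrix.updateCol_ne (Finset.ne_of_mem_erase hi)]
        ring

lemma deriv_det_row {R A : Type*} [CommRing R] [CommRing A] [Algebra R A]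
    (D : Derivation R A A) {m : ℕ} (M : Matrix (Fin m) (Fin m) A) :
    D M.det = ∑ r : Fin m, (M.updateRow r (fun c => D (M r c))).det := by
  conv_lhs => rw [← Matrix.det_transpose M]
  rw [deriv_det]
  refine Finset.sum_congr rfl fun r _ => ?_
  have : (Mᵀ.updateCol r fun a => D (Mᵀ a r)) = (M.updateRow r fun c => D (M r c))ᵀ := by
    rw [Matrix.updateCol_transpose]
    rfl
  rw [this, Matrix.det_transpose]

lemma val_succAbove' {n : ℕ} (p : Fin (n + 1)) (q : Fin n) :
    ((p.succAbove q : Fin (n + 1)) : ℕ) = if (q : ℕ) < (p : ℕ) then (q : ℕ) else (q : ℕ) + 1 := by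
  by_cases h : (q : ℕ) < (p : ℕ)
  · rw [if_pos h, Fin.succAbove_of_castSucc_lt p q (by rwa [Fin.lt_def, Fin.coe_castSucc])]
    rfl
  · rw [if_neg h, Fin.succAbove_of_le_castSucc p q (by rw [Fin.le_def, Fin.coe_castSucc]; omega)]
    rfl

lemma succAbove_succAbove_comm {n : ℕ} {i j : Fin (n + 1 + 1)} {c0 c1 : Fin (n + 1)}
    (hij : i ≠ j) (h0 : i.succAbove c0 = j) (h1 : j.succAbove c1 = i) (q : Fin n) :
    i.succAbove (c0.succAbove q) = j.succAbove (c1.succAbove q) := by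
  have hij' : (i : ℕ) ≠ (j : ℕ) := fun h => hij (Fin.ext h)
  have h0' := congrArg Fin.val h0
  have h1' := congrArg Fin.val h1
  rw [val_succAbove'] at h0' h1'
  apply Fin.ext
  rw [val_succAbove', val_succAbove', val_succAbove', val_succAbove']
  split_ifs at h0' h1' ⊢ <;> omega

lemma c0c1_parity {n : ℕ} {i j : Fin (n + 1 + 1)} {c0 c1 : Fin (n + 1)}
    (hij : i ≠ j) (h0 : i.succAbove c0 = j) (h1 : j.succAbove c1 = i) :
    (c0 : ℕ) + (c1 : ℕ) + 2 = (i : ℕ) + (j : ℕ) + 1 := by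
  have hij' : (i : ℕ) ≠ (j : ℕ) := fun h => hij (Fin.ext h)
  have h0' := congrArg Fin.val h0
  have h1' := congrArg Fin.val h1
  rw [val_succAbove'] at h0' h1'
  split_ifs at h0' h1' <;> omega

lemma keyId (k : Type) [Field k] (m : ℕ) (i j r : Fin (m + 1 + 1)) :
    (∑ kk : Fin (m + 1), genX k (m + 1) kk i * pderiv (kk, j) (Fm k (m + 1) r)) =
      if r = j then 0
      else if r = i then
        (-1 : MvPolynomial (Fin (m + 1) × Fin (m + 1 + 1)) k) ^ ((i : ℕ) + (j : ℕ) + 1) *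
          Fm k (m + 1) j
      else if i = j then Fm k (m + 1) r else 0 := by
  classical
  let Qp := MvPolynomial (Fin (m + 1) × Fin (m + 1 + 1)) k
  let D : Derivation k Qp Qp := ∑ kk : Fin (m + 1), genX k (m + 1) kk i • pderiv (kk, j)
  have hD : ∀ P : Qp, D P = ∑ kk : Fin (m + 1), genX k (m + 1) kk i * pderiv (kk, j) P := by
    intro P
    rw [show D P = (∑ kk : Fin (m + 1), genX k (m + 1) kk i • pderiv (kk, j) :
      Derivation k Qp Qp) P from rfl, derivation_sum_apply]
    exact Finset.sum_congr rfl fun kk _ => by rw [Derivation.smul_apply, smul_eq_mul]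
  have hDX : ∀ (a : Fin (m + 1)) (c : Fin (m + 1 + 1)),
      D (MvPolynomial.X (a, c)) =
        if c = j then (MvPolynomial.X ((a, i)) : Qp) else 0 := by
    intro a c
    rw [hD]
    by_cases hcj : c = j
    · subst hcj
      rw [if_pos rfl, Finset.sum_eq_single a]
      · rw [show pderiv (a, c) (MvPolynomial.X (a, c) : Qp) = 1 from pderiv_X_self _, mul_one]
        rfl
      · intro kk _ hka
        rw [pderiv_X_of_ne (fun hh : (a, c) = (kk, c) => hka (congrArg Prod.fst hh).symm),
          mul_zero]
      · intro h; exact absurd (Finset.mem_univ a) h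
    · rw [if_neg hcj, Finset.sum_eq_zero]
      intro kk _
      rw [pderiv_X_of_ne (fun hh : (a, c) = (kk, j) => hcj (congrArg Prod.snd hh)), mul_zero]
  have step1 : (∑ kk : Fin (m + 1), genX k (m + 1) kk i * pderiv (kk, j) (Fm k (m + 1) r)) =
      ∑ c : Fin (m + 1), ((Matrix.of fun a b : Fin (m + 1) => (MvPolynomial.X (a, r.succAbove b) : Qp)).updateCol
        c fun a => D (Matrix.of (fun a b : Fin (m + 1) => (MvPolynomial.X (a, r.succAbove b) : Qp)) a c)).det := by
    rw [← hD]
    exact deriv_det D _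
  rw [step1]
  by_cases hrj : r = j
  · rw [if_pos hrj]
    refine Finset.sum_eq_zero fun c _ => ?_
    refine Matrix.det_eq_zero_of_column_eq_zero c fun a => ?_
    rw [Matrix.updateCol_self]
    rw [show (Matrix.of (fun a b : Fin (m + 1) => (MvPolynomial.X (a, r.succAbove b) : Qp)) a c) =
      MvPolynomial.X (a, r.succAbove c) from rfl, hDX, if_neg]
    exact fun h => Fin.succAbove_ne r c (by rw [h, ← hrj])
  · rw [if_neg hrj]
    obtain ⟨c0, hc0⟩ := Fin.exists_succAbove_eq (show j ≠ r from fun h => hrj h.symm)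
    have hsingle : (∑ c : Fin (m + 1), ((Matrix.of fun a b : Fin (m + 1) =>
        (MvPolynomial.X (a, r.succAbove b) : Qp)).updateCol
          c fun a => D (Matrix.of (fun a b : Fin (m + 1) =>
            (MvPolynomial.X (a, r.succAbove b) : Qp)) a c)).det) =
        ((Matrix.of fun a b : Fin (m + 1) => (MvPolynomial.X (a, r.succAbove b) : Qp)).updateCol
          c0 fun a => (MvPolynomial.X (a, i) : Qp)).det := by
      refine (Finset.sum_eq_single c0 ?_ ?_).trans ?_
      · intro c _ hc
        refine Matrix.det_eq_zero_of_column_eq_zero c fun a => ?_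
        rw [Matrix.updateCol_self]
        refine (hDX a _).trans (if_neg fun h => hc ?_)
        exact Fin.succAbove_right_injective (h.trans hc0.symm)
      · intro h; exact absurd (Finset.mem_univ c0) h
      · have hcolfun : (fun a => D ((Matrix.of fun a b : Fin (m + 1) =>
            (MvPolynomial.X (a, r.succAbove b) : Qp)) a c0)) =
            fun a => (MvPolynomial.X (a, i) : Qp) :=
          funext fun a => (hDX a _).trans (if_pos hc0)
        rw [hcolfun]
    rw [hsingle]
    by_cases hri : r = i
    · rw [if_pos hri]
      subst hri
      obtain ⟨c1, hc1⟩ := Fin.exists_succAbove_eq (show r ≠ j from hrj)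
      have hpar : (c0 : ℕ) + (c1 : ℕ) + 2 = (r : ℕ) + (j : ℕ) + 1 :=
        c0c1_parity hrj hc0 hc1
      rw [show Fm k (m + 1) j = (Matrix.of fun a b : Fin (m + 1) =>
        (MvPolynomial.X (a, j.succAbove b) : Qp)).det from rfl]
      rw [Matrix.det_succ_column _ c0, Matrix.det_succ_column _ c1, Finset.mul_sum]
      refine Finset.sum_congr rfl fun a _ => ?_
      have hsub : ((Matrix.of fun a b : Fin (m + 1) => (MvPolynomial.X (a, r.succAbove b) : Qp)).updateCol c0
          (fun a => (MvPolynomial.X (a, r) : Qp))).submatrix a.succAbove c0.succAbove =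
          (Matrix.of fun a b : Fin (m + 1) => (MvPolynomial.X (a, j.succAbove b) : Qp)).submatrix
            a.succAbove c1.succAbove := by
        ext p q
        rw [Matrix.submatrix_apply, Matrix.submatrix_apply,
          Matrix.updateCol_ne (Fin.succAbove_ne c0 q)]
        rw [show (Matrix.of (fun a b : Fin (m + 1) => (MvPolynomial.X (a, r.succAbove b) : Qp)))
            (a.succAbove p) (c0.succAbove q) =
          MvPolynomial.X (a.succAbove p, r.succAbove (c0.succAbove q)) from rfl]
        rw [show (Matrix.of (fun a b : Fin (m + 1) => (MvPolynomial.X (a, j.succAbove b) : Qp)))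
            (a.succAbove p) (c1.succAbove q) =
          MvPolynomial.X (a.succAbove p, j.succAbove (c1.succAbove q)) from rfl]
        rw [succAbove_succAbove_comm hrj hc0 hc1 q]
      rw [hsub, Matrix.updateCol_self]
      have hsgn : ((-1 : Qp)) ^ ((a : ℕ) + (c0 : ℕ)) =
          (-1) ^ ((r : ℕ) + (j : ℕ) + 1) * (-1) ^ ((a : ℕ) + (c1 : ℕ)) := by
        have h2 : (r : ℕ) + (j : ℕ) + 1 + ((a : ℕ) + (c1 : ℕ)) =
            ((a : ℕ) + (c0 : ℕ)) + 2 * ((c1 : ℕ) + 1) := by omega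
        calc ((-1 : Qp)) ^ ((a : ℕ) + (c0 : ℕ))
            = (-1) ^ (((a : ℕ) + (c0 : ℕ)) + 2 * ((c1 : ℕ) + 1)) := by
              conv_rhs => rw [pow_add, pow_mul, neg_one_sq, one_pow, mul_one]
          _ = (-1) ^ ((r : ℕ) + (j : ℕ) + 1) * (-1) ^ ((a : ℕ) + (c1 : ℕ)) := by
              rw [← h2, pow_add]
      rw [hsgn, show (Matrix.of (fun a b : Fin (m + 1) =>
        (MvPolynomial.X (a, j.succAbove b) : Qp))) a c1 = (MvPolynomial.X (a, r) : Qp) from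
          congrArg (fun t => (MvPolynomial.X (a, t) : Qp)) hc1]
      ring
    · rw [if_neg hri]
      by_cases hij2 : i = j
      · rw [if_pos hij2]
        have hcol' : (fun a => (MvPolynomial.X (a, i) : Qp)) =
            fun a => (Matrix.of fun a b : Fin (m + 1) =>
              (MvPolynomial.X (a, r.succAbove b) : Qp)) a c0 := by
          funext a
          rw [show (Matrix.of (fun a b : Fin (m + 1) => (MvPolynomial.X (a, r.succAbove b) : Qp))) a c0 =
            MvPolynomial.X (a, r.succAbove c0) from rfl, hc0, hij2]
        rw [hcol', Matrix.updateCol_eq_self]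
        rfl
      · rw [if_neg hij2]
        obtain ⟨c1, hc1⟩ := Fin.exists_succAbove_eq (show i ≠ r from fun h => hri h.symm)
        have hcc : c1 ≠ c0 := fun h => hij2 (by rw [← hc1, h, hc0])
        refine Matrix.det_zero_of_column_eq hcc fun a => ?_
        rw [Matrix.updateCol_ne hcc, Matrix.updateCol_self]
        exact congrArg (fun t => (MvPolynomial.X (a, t) : Qp)) hc1

lemma rowId (k : Type) [Field k] (n : ℕ) (kk : Fin n) (r : Fin (n + 1)) :
    (∑ s : Fin (n + 1), genX k n kk s * pderiv (kk, s) (Fm k n r)) = Fm k n r := by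
  classical
  let Qp := MvPolynomial (Fin n × Fin (n + 1)) k
  let D : Derivation k Qp Qp := ∑ s : Fin (n + 1), genX k n kk s • pderiv (kk, s)
  have hD : ∀ P : Qp, D P = ∑ s : Fin (n + 1), genX k n kk s * pderiv (kk, s) P := by
    intro P
    rw [show D P = (∑ s : Fin (n + 1), genX k n kk s • pderiv (kk, s) :
      Derivation k Qp Qp) P from rfl, derivation_sum_apply]
    exact Finset.sum_congr rfl fun s _ => by rw [Derivation.smul_apply, smul_eq_mul]
  have hDX : ∀ (a : Fin n) (c : Fin (n + 1)),
      D (MvPolynomial.X (a, c)) =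
        if a = kk then (MvPolynomial.X ((a, c)) : Qp) else 0 := by
    intro a c
    rw [hD]
    by_cases hak : a = kk
    · subst hak
      rw [if_pos rfl, Finset.sum_eq_single c]
      · rw [show pderiv (a, c) (MvPolynomial.X (a, c) : Qp) = 1 from pderiv_X_self _, mul_one]
        rfl
      · intro s _ hsc
        rw [pderiv_X_of_ne (fun hh : (a, c) = (a, s) => hsc ((congrArg Prod.snd hh).symm)),
          mul_zero]
      · intro h; exact absurd (Finset.mem_univ c) h
    · rw [if_neg hak, Finset.sum_eq_zero]
      intro s _
      rw [pderiv_X_of_ne (fun hh : (a, c) = (kk, s) => hak (congrArg Prod.fst hh)), mul_zero]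
  rw [← hD]
  rw [show Fm k n r = (Matrix.of fun a b : Fin n =>
    (MvPolynomial.X (a, r.succAbove b) : Qp)).det from rfl]
  rw [deriv_det_row D]
  rw [Finset.sum_eq_single kk]
  · have hrow : (fun c => D ((Matrix.of fun a b : Fin n =>
        (MvPolynomial.X (a, r.succAbove b) : Qp)) kk c)) =
        (Matrix.of fun a b : Fin n => (MvPolynomial.X (a, r.succAbove b) : Qp)) kk :=
      funext fun c => (hDX kk _).trans (if_pos rfl)
    rw [hrow, Matrix.updateRow_eq_self]
  · intro a _ hak
    refine Matrix.det_eq_zero_of_row_eq_zero a fun c => ?_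
    rw [Matrix.updateRow_self]
    exact (hDX a _).trans (if_neg hak)
  · intro h; exact absurd (Finset.mem_univ kk) h

lemma jq_mulVecLin_apply (k : Type) [Field k] (n : ℕ)
    (b : Fin n × Fin (n + 1) → MvPolynomial (Fin n × Fin (n + 1)) k) (r : Fin (n + 1)) :
    (JQ k n).mulVecLin b r =
      ∑ kk : Fin n, ∑ t : Fin (n + 1), pderiv (kk, t) (Fm k n r) * b (kk, t) := by
  rw [Matrix.mulVecLin_apply]
  rw [show ((JQ k n) *ᵥ b) r = ∑ p : Fin n × Fin (n + 1), JQ k n r p * b p from rfl]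
  rw [Fintype.sum_prod_type]
  rfl

lemma single_mem (k : Type) [Field k] (m : ℕ) (s i : Fin (m + 1 + 1)) :
    (fun r => if r = i then Fm k (m + 1) s else 0) ∈
      LinearMap.range (Matrix.mulVecLin (JQ k (m + 1))) := by
  classical
  -- the vector `u` with entries `Fm r`
  have hu : (fun r => Fm k (m + 1) r) ∈ LinearMap.range (Matrix.mulVecLin (JQ k (m + 1))) := by
    refine ⟨fun p => if p.1 = ⟨0, Nat.succ_pos m⟩ then genX k (m + 1) ⟨0, Nat.succ_pos m⟩ p.2 else 0,
      funext fun r => ?_⟩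
    rw [jq_mulVecLin_apply, Finset.sum_eq_single (⟨0, Nat.succ_pos m⟩ : Fin (m + 1))]
    · exact (Finset.sum_congr rfl fun t _ => by rw [if_pos rfl]; ring).trans
        (rowId k (m + 1) ⟨0, Nat.succ_pos m⟩ r)
    · intro a _ ha
      refine Finset.sum_eq_zero fun t _ => ?_
      rw [if_neg ha, mul_zero]
    · intro h; exact absurd (Finset.mem_univ _) h
  -- the vector `W i`
  have hW : ∀ i : Fin (m + 1 + 1), (fun r => if r = i then 0 else Fm k (m + 1) r) ∈
      LinearMap.range (Matrix.mulVecLin (JQ k (m + 1))) := by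
    intro i
    refine ⟨fun p => if p.2 = i then genX k (m + 1) p.1 i else 0, funext fun r => ?_⟩
    rw [jq_mulVecLin_apply]
    have : ∀ kk : Fin (m + 1), (∑ t : Fin (m + 1 + 1), pderiv (kk, t) (Fm k (m + 1) r) *
        (if t = i then genX k (m + 1) kk i else 0)) = genX k (m + 1) kk i * pderiv (kk, i) (Fm k (m + 1) r) := by
      intro kk
      rw [Finset.sum_eq_single i]
      · rw [if_pos rfl]; ring
      · intro t _ ht; rw [if_neg ht, mul_zero]
      · intro h; exact absurd (Finset.mem_univ _) h
    rw [Finset.sum_congr rfl fun kk _ => this kk, keyId]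
    by_cases hri : r = i
    · rw [if_pos hri, if_pos hri]
    · rw [if_neg hri, if_neg hri, if_neg hri, if_pos rfl]
  -- off-diagonal vectors
  have hoff : ∀ s i : Fin (m + 1 + 1), s ≠ i →
      (fun r => if r = i then Fm k (m + 1) s else 0) ∈
        LinearMap.range (Matrix.mulVecLin (JQ k (m + 1))) := by
    intro s i hsi
    refine ⟨fun p => if p.2 = s then
      (-1 : MvPolynomial (Fin (m + 1) × Fin (m + 1 + 1)) k) ^ ((i : ℕ) + (s : ℕ) + 1) * genX k (m + 1) p.1 i
      else 0, funext fun r => ?_⟩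
    rw [jq_mulVecLin_apply]
    have : ∀ kk : Fin (m + 1), (∑ t : Fin (m + 1 + 1), pderiv (kk, t) (Fm k (m + 1) r) *
        (if t = s then (-1 : MvPolynomial (Fin (m + 1) × Fin (m + 1 + 1)) k) ^ ((i : ℕ) + (s : ℕ) + 1) *
          genX k (m + 1) kk i else 0)) =
        (-1 : MvPolynomial (Fin (m + 1) × Fin (m + 1 + 1)) k) ^ ((i : ℕ) + (s : ℕ) + 1) *
          (genX k (m + 1) kk i * pderiv (kk, s) (Fm k (m + 1) r)) := by
      intro kk
      rw [Finset.sum_eq_single s]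
      · rw [if_pos rfl]; ring
      · intro t _ ht; rw [if_neg ht, mul_zero]
      · intro h; exact absurd (Finset.mem_univ _) h
    rw [Finset.sum_congr rfl fun kk _ => this kk, ← Finset.mul_sum, keyId]
    by_cases hrs : r = s
    · rw [if_pos hrs, mul_zero, if_neg (fun h : r = i => hsi (hrs ▸ h))]
    · rw [if_neg hrs]
      by_cases hri : r = i
      · rw [if_pos hri, if_pos hri, ← mul_assoc, ← pow_add,
          Even.neg_one_pow ⟨(i : ℕ) + (s : ℕ) + 1, rfl⟩, one_mul]
      · rw [if_neg hri, if_neg hri, if_neg (fun h : i = s => hsi h.symm), mul_zero]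
  by_cases hsi : s = i
  · subst hsi
    have hsub := Submodule.sub_mem _ hu (hW s)
    have : (fun r => Fm k (m + 1) r) - (fun r => if r = s then 0 else Fm k (m + 1) r) =
        fun r => if r = s then Fm k (m + 1) s else 0 := by
      funext r
      by_cases hrs : r = s
      · subst hrs; simp
      · simp [hrs]
    rwa [this] at hsub
  · exact hoff s i hsi

lemma smul_single_mem (k : Type) [Field k] (m : ℕ) (p : MvPolynomial (Fin (m + 1) × Fin (m + 1 + 1)) k)
    (hp : p ∈ In k (m + 1)) (i : Fin (m + 1 + 1)) :
    (p • fun j => if i = j then (1 : MvPolynomial (Fin (m + 1) × Fin (m + 1 + 1)) k) else 0) ∈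
      LinearMap.range (Matrix.mulVecLin (JQ k (m + 1))) := by
  classical
  induction hp using Submodule.span_induction with
  | mem x hx =>
    obtain ⟨s, rfl⟩ := hx
    have : (Fm k (m + 1) s • fun j => if i = j then
        (1 : MvPolynomial (Fin (m + 1) × Fin (m + 1 + 1)) k) else 0) =
        fun r => if r = i then Fm k (m + 1) s else 0 := by
      funext r
      by_cases hri : r = i
      · subst hri; simp
      · have hir : ¬ i = r := fun h => hri h.symm
        simp [hri, hir]
    rw [this]
    exact single_mem k m s i
  | zero => rw [zero_smul]; exact Submodule.zero_mem _
  | add x y hx hy ihx ihy => rw [add_smul]; exact Submodule.add_mem _ ihx ihy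
  | smul a x hx ih => rw [smul_assoc]; exact Submodule.smul_mem _ a ih

lemma In_vec_mem (k : Type) [Field k] (m : ℕ)
    (x : Fin (m + 1 + 1) → MvPolynomial (Fin (m + 1) × Fin (m + 1 + 1)) k)
    (hx : ∀ r, x r ∈ In k (m + 1)) :
    x ∈ LinearMap.range (Matrix.mulVecLin (JQ k (m + 1))) := by
  classical
  rw [pi_eq_sum_univ x]
  exact Submodule.sum_mem _ fun i _ => smul_single_mem k m (x i) (hx i) i

set_option maxHeartbeats 4000000 in
lemma theIso (k : Type) [Field k] (m : ℕ) :
    Nonempty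
      (((Fin (m + 1 + 1) → MvPolynomial (Fin (m + 1) × Fin (m + 1 + 1)) k) ⧸
          LinearMap.range (Matrix.mulVecLin (JQ k (m + 1)))) ≃ₗ[MvPolynomial (Fin (m + 1) × Fin (m + 1 + 1)) k]
        ((Fin (m + 1 + 1) → Rring k (m + 1)) ⧸
          (LinearMap.range (Matrix.mulVecLin (JR k (m + 1)))).restrictScalars
            (MvPolynomial (Fin (m + 1) × Fin (m + 1 + 1)) k))) := by
  classical
  letI : Module (Rring k (m + 1)) (Fin (m + 1 + 1) → Rring k (m + 1)) := Pi.module _ _ _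
  letI : Module (Rring k (m + 1)) (Fin (m + 1) × Fin (m + 1 + 1) → Rring k (m + 1)) :=
    Pi.module _ _ _
  let Qp := MvPolynomial (Fin (m + 1) × Fin (m + 1 + 1)) k
  let Rr := Rring k (m + 1)
  let N : Submodule Qp (Fin (m + 1 + 1) → Rr) :=
    (LinearMap.range (Matrix.mulVecLin (JR k (m + 1)))).restrictScalars Qp
  let φ : (Fin (m + 1 + 1) → Qp) →ₗ[Qp] (Fin (m + 1 + 1) → Rr) :=
    LinearMap.pi fun i => (Algebra.linearMap Qp Rr).comp (LinearMap.proj i)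
  let ψ : (Fin (m + 1 + 1) → Qp) →ₗ[Qp] ((Fin (m + 1 + 1) → Rr) ⧸ N) := N.mkQ.comp φ
  have hφ : ∀ x i, φ x i = algebraMap Qp Rr (x i) := fun x i => rfl
  have hsurj : Function.Surjective ψ := by
    intro y
    obtain ⟨w, rfl⟩ := N.mkQ_surjective y
    refine ⟨fun i => (Ideal.Quotient.mk_surjective (w i)).choose, ?_⟩
    show N.mkQ (φ _) = N.mkQ w
    congr 1
    funext i
    rw [hφ, Ideal.Quotient.algebraMap_eq]
    exact (Ideal.Quotient.mk_surjective (w i)).choose_spec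
  have hcomm : ∀ v : Fin (m + 1) × Fin (m + 1 + 1) → Qp,
      φ ((JQ k (m + 1)).mulVecLin v) =
        (JR k (m + 1)).mulVecLin (fun p => algebraMap Qp Rr (v p)) := by
    intro v
    funext i
    rw [hφ, Matrix.mulVecLin_apply, Matrix.mulVecLin_apply]
    exact RingHom.map_mulVec (algebraMap Qp Rr) (JQ k (m + 1)) v i
  have hker : LinearMap.ker ψ = LinearMap.range (Matrix.mulVecLin (JQ k (m + 1))) := by
    apply le_antisymm
    · intro x hx
      rw [LinearMap.mem_ker] at hx
      have hφx : φ x ∈ LinearMap.range (Matrix.mulVecLin (JR k (m + 1))) := by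
        rw [LinearMap.comp_apply, Submodule.mkQ_apply, Submodule.Quotient.mk_eq_zero] at hx
        exact hx
      obtain ⟨w, hw⟩ := hφx
      choose v hv using fun p => Ideal.Quotient.mk_surjective (w p)
      have hveq : (fun p => algebraMap Qp Rr (v p)) = w := by
        funext p; rw [Ideal.Quotient.algebraMap_eq]; exact hv p
      have hdiff : ∀ r, (x - (JQ k (m + 1)).mulVecLin v) r ∈ In k (m + 1) := by
        intro r
        have h0 : algebraMap Qp Rr ((x - (JQ k (m + 1)).mulVecLin v) r) = 0 := by
          have h1 : φ (x - (JQ k (m + 1)).mulVecLin v) = 0 := by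
            rw [map_sub, hcomm v, hveq, hw, sub_self]
          calc algebraMap Qp Rr ((x - (JQ k (m + 1)).mulVecLin v) r)
              = φ (x - (JQ k (m + 1)).mulVecLin v) r := (hφ _ r).symm
            _ = 0 := by rw [h1]; rfl
        rwa [Ideal.Quotient.algebraMap_eq, Ideal.Quotient.eq_zero_iff_mem] at h0
      have hmem := In_vec_mem k m _ hdiff
      have hsum := Submodule.add_mem _ hmem
        (⟨v, rfl⟩ : (JQ k (m + 1)).mulVecLin v ∈ LinearMap.range (Matrix.mulVecLin (JQ k (m + 1))))
      simpa using hsum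
    · rintro x ⟨v, rfl⟩
      rw [LinearMap.mem_ker, LinearMap.comp_apply, Submodule.mkQ_apply,
        Submodule.Quotient.mk_eq_zero]
      exact ⟨fun p => algebraMap Qp Rr (v p), (hcomm v).symm⟩
  exact ⟨(Submodule.quotEquivOfEq _ _ hker.symm).trans (ψ.quotKerEquivOfSurjective hsurj)⟩

theorem stmt13 (k : Type) [Field k] (n : ℕ) (hn : 2 ≤ n) :
    Nonempty
      (((Fin (n + 1) → MvPolynomial (Fin n × Fin (n + 1)) k) ⧸
          LinearMap.range (Matrix.mulVecLin (JQ k n))) ≃ₗ[MvPolynomial (Fin n × Fin (n + 1)) k]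
        ((Fin (n + 1) → Rring k n) ⧸
          (LinearMap.range (Matrix.mulVecLin (JR k n))).restrictScalars
            (MvPolynomial (Fin n × Fin (n + 1)) k))) ∧
    ∀ i j : Fin (n + 1), i ≠ j → ∀ r : Fin (n + 1),
      (∑ kk : Fin n, genX k n kk i * MvPolynomial.pderiv (kk, j) (Fm k n r)) =
        if r = i then
          (-1 : MvPolynomial (Fin n × Fin (n + 1)) k) ^ ((i : ℕ) + (j : ℕ) + 1) * Fm k n j
        else 0 := by
  obtain ⟨m, rfl⟩ : ∃ m, n = m + 1 := ⟨n - 1, by omega⟩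
  refine ⟨theIso k m, ?_⟩
  intro i j hij r
  rw [keyId k m i j r]
  by_cases h1 : r = j
  · rw [if_pos h1, if_neg (fun h : r = i => hij (h.symm.trans h1))]
  · rw [if_neg h1]
    by_cases h2 : r = i
    · rw [if_pos h2, if_pos h2]
    · rw [if_neg h2, if_neg h2, if_neg hij]
end
end

section
/- For i = j, the column F_i·e_i of Q^{n+1} lies in the column span of J^T_Q: explicitly, Σ_{u≠i} x_{i,u} b_{i,u} − Σ_{k≠i} x_{k,i} b_{k,i} = F_i e_i, where b_{k,j} denotes the column of J^T_Q corresponding to ∂/∂x_{k,j}. -/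
open MvPolynomial Matrix Finset

noncomputable section

lemma pderiv_prod_X {α V R : Type*} [DecidableEq α] [DecidableEq V] [CommRing R]
    (s : Finset α) (g : α → V) (v : V) :
    MvPolynomial.pderiv v (∏ t ∈ s, (X (g t) : MvPolynomial V R)) =
      ∑ t ∈ s.filter fun t => g t = v, ∏ t' ∈ s.erase t, X (g t') := by
  induction s using Finset.induction_on with
  | empty => simp
  | @insert a s ha ih =>
    have herase : ∀ t ∈ s.filter fun t => g t = v,
        (∏ t' ∈ (insert a s).erase t, (X (g t') : MvPolynomial V R))
          = X (g a) * ∏ t' ∈ s.erase t, X (g t') := by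
      intro t ht
      have hta : a ≠ t := fun h => ha (h ▸ (Finset.mem_filter.mp ht).1)
      rw [Finset.erase_insert_of_ne hta,
        Finset.prod_insert (fun h => ha (Finset.mem_of_mem_erase h))]
    rw [Finset.prod_insert ha, pderiv_mul, ih, Finset.filter_insert, pderiv_X]
    by_cases hv : g a = v
    · rw [if_pos hv, Finset.sum_insert (by simp [ha]), Finset.erase_insert ha, hv,
        Pi.single_eq_same, one_mul, Finset.sum_congr rfl herase, ← Finset.mul_sum, hv]
    · rw [if_neg hv, Pi.single_eq_of_ne hv, zero_mul, zero_add,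
        Finset.sum_congr rfl herase, ← Finset.mul_sum]

lemma pderiv_permProd (k : Type) [Field k] (n : ℕ) (r : Fin (n + 1))
    (σ : Equiv.Perm (Fin n)) (a : Fin n) (u : Fin (n + 1)) :
    MvPolynomial.pderiv (a, u)
        (∏ t, (X (σ t, r.succAbove t) : MvPolynomial (Fin n × Fin (n + 1)) k)) =
      if r.succAbove (σ.symm a) = u then
        ∏ t ∈ Finset.univ.erase (σ.symm a), X (σ t, r.succAbove t)
      else 0 := by
  rw [pderiv_prod_X]
  have hfilter : (Finset.univ.filter
        fun t => ((σ t, r.succAbove t) : Fin n × Fin (n + 1)) = (a, u))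
      = if r.succAbove (σ.symm a) = u then {σ.symm a} else ∅ := by
    ext t
    by_cases h : r.succAbove (σ.symm a) = u
    · rw [if_pos h]
      simp only [Finset.mem_filter, Finset.mem_univ, true_and, Prod.mk.injEq,
        Finset.mem_singleton]
      constructor
      · rintro ⟨h1, _⟩
        rw [← h1, Equiv.symm_apply_apply]
      · rintro rfl
        exact ⟨Equiv.apply_symm_apply σ a, h⟩
    · rw [if_neg h]
      simp only [Finset.mem_filter, Finset.mem_univ, true_and, Prod.mk.injEq,
        Finset.notMem_empty, iff_false, not_and]
      intro h1
      rw [← h1, Equiv.symm_apply_apply] at h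
      exact h
  rw [hfilter]
  split <;> simp

lemma key (k : Type) [Field k] (n : ℕ) (i : Fin n) (r : Fin (n + 1))
    (σ : Equiv.Perm (Fin n)) :
    ((∑ u ∈ Finset.univ.erase (Fin.castSucc i),
          (X (i, u) : MvPolynomial (Fin n × Fin (n + 1)) k) *
            MvPolynomial.pderiv (i, u) (∏ t, X (σ t, r.succAbove t))) -
        ∑ a ∈ Finset.univ.erase i,
          X (a, Fin.castSucc i) *
            MvPolynomial.pderiv (a, Fin.castSucc i) (∏ t, X (σ t, r.succAbove t))) =
      if r = Fin.castSucc i then ∏ t, X (σ t, r.succAbove t) else 0 := by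
  set c := Fin.castSucc i with hc
  -- rewrite both sums using pderiv_permProd
  simp only [pderiv_permProd, mul_ite, mul_zero]
  set P : MvPolynomial (Fin n × Fin (n + 1)) k := ∏ t, X (σ t, r.succAbove t) with hP
  have hmul : ∀ t0 : Fin n,
      X ((σ t0 : Fin n), r.succAbove t0) * ∏ t ∈ Finset.univ.erase t0,
        (X (σ t, r.succAbove t) : MvPolynomial (Fin n × Fin (n + 1)) k) = P := by
    intro t0
    exact Finset.mul_prod_erase Finset.univ
      (fun t => (X (σ t, r.succAbove t) : MvPolynomial (Fin n × Fin (n + 1)) k))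
      (Finset.mem_univ t0)
  have h1 : (∑ u ∈ Finset.univ.erase c,
      if r.succAbove (σ.symm i) = u then
        (X (i, u) : MvPolynomial (Fin n × Fin (n + 1)) k) *
          ∏ t ∈ Finset.univ.erase (σ.symm i), X (σ t, r.succAbove t)
      else 0)
      = if r.succAbove (σ.symm i) ∈ Finset.univ.erase c then P else 0 := by
    rw [Finset.sum_ite_eq (Finset.univ.erase c) (r.succAbove (σ.symm i))
      (fun u => (X (i, u) : MvPolynomial (Fin n × Fin (n + 1)) k) *
        ∏ t ∈ Finset.univ.erase (σ.symm i), X (σ t, r.succAbove t))]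
    split
    · have := hmul (σ.symm i)
      rw [Equiv.apply_symm_apply] at this
      rw [this]
    · rfl
  rw [h1]
  by_cases hrc : r = c
  · -- second sum is zero, first condition true
    have h2 : (∑ a ∈ Finset.univ.erase i,
        if r.succAbove (σ.symm a) = c then
          (X (a, c) : MvPolynomial (Fin n × Fin (n + 1)) k) *
            ∏ t ∈ Finset.univ.erase (σ.symm a), X (σ t, r.succAbove t)
        else 0) = 0 := by
      refine Finset.sum_eq_zero fun a _ => ?_
      rw [if_neg (hrc ▸ Fin.succAbove_ne r (σ.symm a))]
    rw [h2, sub_zero, if_pos hrc, if_pos]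
    exact Finset.mem_erase.mpr ⟨hrc ▸ Fin.succAbove_ne r (σ.symm i), Finset.mem_univ _⟩
  · obtain ⟨j1, hj1⟩ : ∃ j1, r.succAbove j1 = c :=
      Fin.exists_succAbove_eq (fun h => hrc h.symm)
    have hcond : ∀ a : Fin n, (r.succAbove (σ.symm a) = c) ↔ (a = σ j1) := by
      intro a
      rw [← hj1]
      constructor
      · intro h
        have := Fin.succAbove_right_injective (p := r) h
        rw [← this, Equiv.apply_symm_apply]
      · rintro rfl
        rw [Equiv.symm_apply_apply]
    have h2 : (∑ a ∈ Finset.univ.erase i,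
        if r.succAbove (σ.symm a) = c then
          (X (a, c) : MvPolynomial (Fin n × Fin (n + 1)) k) *
            ∏ t ∈ Finset.univ.erase (σ.symm a), X (σ t, r.succAbove t)
        else 0) = if σ j1 ∈ Finset.univ.erase i then P else 0 := by
      rw [Finset.sum_congr rfl (fun a _ => by rw [if_congr (hcond a) rfl rfl]),
        Finset.sum_ite_eq' (Finset.univ.erase i) (σ j1)
          (fun a => (X (a, c) : MvPolynomial (Fin n × Fin (n + 1)) k) *
            ∏ t ∈ Finset.univ.erase (σ.symm a), X (σ t, r.succAbove t))]
      split
      · have := hmul j1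
        rw [hj1] at this
        rw [Equiv.symm_apply_apply, this]
      · rfl
    rw [h2, if_neg hrc]
    have hiff : (r.succAbove (σ.symm i) ∈ Finset.univ.erase c) ↔
        (σ j1 ∈ Finset.univ.erase i) := by
      simp only [Finset.mem_erase, Finset.mem_univ, and_true]
      constructor
      · exact fun h h' => h ((hcond i).mpr h'.symm)
      · exact fun h h' => h (((hcond i).mp h').symm)
    by_cases hmem : σ j1 ∈ Finset.univ.erase i
    · rw [if_pos hmem, if_pos (hiff.mpr hmem), sub_self]
    · rw [if_neg hmem, if_neg (fun h => hmem (hiff.mp h)), sub_self]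

lemma Fm_eq (k : Type) [Field k] (n : ℕ) (r : Fin (n + 1)) :
    Fm k n r = ∑ σ : Equiv.Perm (Fin n),
      ((Equiv.Perm.sign σ : ℤ) : k) •
        ∏ t, (X (σ t, r.succAbove t) : MvPolynomial (Fin n × Fin (n + 1)) k) := by
  rw [Fm, Matrix.det_apply]
  refine Finset.sum_congr rfl fun σ _ => ?_
  rw [Units.smul_def, ← Int.cast_smul_eq_zsmul k]
  rfl

theorem stmt14 (k : Type) [Field k] (n : ℕ) (hn : 2 ≤ n) (i : Fin n) (r : Fin (n + 1)) :
    ((∑ u ∈ Finset.univ.erase (Fin.castSucc i),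
          genX k n i u * MvPolynomial.pderiv (i, u) (Fm k n r)) -
        ∑ kk ∈ Finset.univ.erase i,
          genX k n kk (Fin.castSucc i) *
            MvPolynomial.pderiv (kk, Fin.castSucc i) (Fm k n r)) =
      if r = Fin.castSucc i then Fm k n r else 0 := by
  have hgen : ∀ (a : Fin n) (u : Fin (n + 1)),
      genX k n a u = (X (a, u) : MvPolynomial (Fin n × Fin (n + 1)) k) := fun _ _ => rfl
  have hterm : ∀ σ : Equiv.Perm (Fin n),
      ((∑ u ∈ Finset.univ.erase (Fin.castSucc i),
            (X (i, u) : MvPolynomial (Fin n × Fin (n + 1)) k) *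
              MvPolynomial.pderiv (i, u) (((Equiv.Perm.sign σ : ℤ) : k) •
                ∏ t, X (σ t, r.succAbove t))) -
          ∑ a ∈ Finset.univ.erase i,
            X (a, Fin.castSucc i) *
              MvPolynomial.pderiv (a, Fin.castSucc i) (((Equiv.Perm.sign σ : ℤ) : k) •
                ∏ t, X (σ t, r.succAbove t))) =
        ((Equiv.Perm.sign σ : ℤ) : k) •
          (if r = Fin.castSucc i then ∏ t, (X (σ t, r.succAbove t) :
            MvPolynomial (Fin n × Fin (n + 1)) k) else 0) := by
    intro σ
    simp only [Derivation.map_smul, mul_smul_comm, ← Finset.smul_sum, ← smul_sub, key]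
  rw [Fm_eq]
  simp only [hgen, map_sum, Finset.mul_sum]
  rw [Finset.sum_comm (s := Finset.univ.erase (Fin.castSucc i)),
    Finset.sum_comm (s := Finset.univ.erase i), ← Finset.sum_sub_distrib,
    Finset.sum_congr rfl fun σ _ => hterm σ]
  by_cases h : r = Fin.castSucc i
  · rw [if_pos h]
    exact Finset.sum_congr rfl fun σ _ => by rw [if_pos h]
  · rw [if_neg h, Finset.sum_congr rfl fun σ _ => by rw [if_neg h, smul_zero],
      Finset.sum_const_zero]
end
end

section
/- Under the dg module action of the Hilbert–Burch dg algebra A on the resolution U of coker J^T_R, the product e_i · a_i := (−1)^{i+1}( Σ_{k≠i} x_{1,k} b_{1,k} − Σ_{ℓ≠1} x_{ℓ,i} b_{ℓ,i} ) satisfies the Leibniz compatibility ∂(e_i · a_i) = (−1)^{i+1} F_i a_i, i.e., applying the differential of U (which sends b_{j,k} to Σ_ℓ (∂F_ℓ/∂x_{j,k}) a_ℓ) to the right-hand side yields (−1)^{i+1} F_i a_i. -/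
open MvPolynomial Matrix Finset

noncomputable section

section aux

variable {τ k : Type} [Field k] [DecidableEq τ] {m : ℕ}

lemma prodX_eq_monomial (v : Fin m → τ) :
    (∏ j, (X (v j) : MvPolynomial τ k)) =
      monomial (∑ j, Finsupp.single (v j) 1) 1 := by
  rw [monomial_sum_one]
  rfl

lemma key_not (v : Fin m → τ) (w : τ) (hw : ∀ j, v j ≠ w) :
    pderiv w (∏ j, (X (v j) : MvPolynomial τ k)) = 0 := by
  rw [prodX_eq_monomial, pderiv_monomial]
  have hs : (∑ j, Finsupp.single (v j) 1) w = 0 := by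
    rw [Finsupp.finset_sum_apply]
    refine Finset.sum_eq_zero fun j _ => ?_
    exact Finsupp.single_eq_of_ne' (hw j)
  simp [hs]

lemma key_mem (v : Fin m → τ) (hv : Function.Injective v) (j0 : Fin m) :
    X (v j0) * pderiv (v j0) (∏ j, (X (v j) : MvPolynomial τ k)) =
      ∏ j, (X (v j) : MvPolynomial τ k) := by
  rw [prodX_eq_monomial, pderiv_monomial]
  set s : τ →₀ ℕ := ∑ j, Finsupp.single (v j) 1 with hs
  have hsw : s (v j0) = 1 := by
    rw [hs, Finsupp.finset_sum_apply]
    rw [Finset.sum_eq_single j0 (fun j _ hj => Finsupp.single_eq_of_ne' (fun h => hj (hv h)))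
      (fun h => absurd (Finset.mem_univ j0) h)]
    simp
  have hle : Finsupp.single (v j0) 1 ≤ s := by
    rw [Finsupp.single_le_iff, hsw]
  rw [hsw, X, monomial_mul]
  rw [add_tsub_cancel_of_le hle]
  norm_num

end aux

theorem stmt17 (k : Type) [Field k] (n : ℕ) (hn : 2 ≤ n) (i : Fin (n + 1))
    (r : Fin (n + 1)) :
    (-1 : MvPolynomial (Fin n × Fin (n + 1)) k) ^ ((i : ℕ) + 1) *
        ((∑ kc ∈ Finset.univ.erase i,
            genX k n ⟨0, by omega⟩ kc *
              MvPolynomial.pderiv ((⟨0, by omega⟩ : Fin n), kc) (Fm k n r)) -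
          ∑ l ∈ Finset.univ.filter (fun l : Fin n => (l : ℕ) ≠ 0),
            genX k n l i * MvPolynomial.pderiv (l, i) (Fm k n r)) =
      if r = i then
        (-1 : MvPolynomial (Fin n × Fin (n + 1)) k) ^ ((i : ℕ) + 1) * Fm k n i
      else 0 := by
  classical
  have hz : 0 < n := by omega
  set z : Fin n := ⟨0, hz⟩ with hzdef
  set P : Equiv.Perm (Fin n) → MvPolynomial (Fin n × Fin (n + 1)) k :=
    fun σ => ∏ j, X ((σ j, r.succAbove j)) with hP
  have hvinj : ∀ σ : Equiv.Perm (Fin n),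
      Function.Injective (fun j : Fin n => ((σ j, r.succAbove j) : Fin n × Fin (n + 1))) := by
    intro σ j j' h
    exact Fin.succAbove_right_injective (congrArg Prod.snd h)
  have hdet : Fm k n r
      = ∑ σ : Equiv.Perm (Fin n), ((Equiv.Perm.sign σ : ℤ)) • P σ := by
    rw [Fm, Matrix.det_apply]
    exact Finset.sum_congr rfl fun σ _ => by rw [Units.smul_def]; rfl
  have hA : ∀ w : Fin n × Fin (n + 1),
      X w * pderiv w (Fm k n r)
        = ∑ σ : Equiv.Perm (Fin n), ((Equiv.Perm.sign σ : ℤ)) • (X w * pderiv w (P σ)) := by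
    intro w
    rw [hdet, map_sum, Finset.mul_sum]
    exact Finset.sum_congr rfl fun σ _ => by rw [map_zsmul, mul_smul_comm]
  -- rewrite genX
  have hgen : ∀ (a : Fin n) (b : Fin (n + 1)), genX k n a b = X ((a, b)) := fun _ _ => rfl
  simp only [hgen]
  -- per-sigma row sums
  have hrowσ : ∀ σ : Equiv.Perm (Fin n),
      (∑ kc ∈ Finset.univ.erase i, X (((z : Fin n), kc)) * pderiv ((z : Fin n), kc) (P σ))
        = if r.succAbove (σ.symm z) ≠ i then P σ else 0 := by
    intro σ
    have hterm : ∀ kc : Fin (n + 1),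
        X (((z : Fin n), kc)) * pderiv ((z : Fin n), kc) (P σ)
          = if kc = r.succAbove (σ.symm z) then P σ else 0 := by
      intro kc
      by_cases h : kc = r.succAbove (σ.symm z)
      · rw [if_pos h, h]
        have := key_mem (k := k)
          (fun j : Fin n => ((σ j, r.succAbove j) : Fin n × Fin (n + 1))) (hvinj σ) (σ.symm z)
        simpa only [Equiv.apply_symm_apply] using this
      · rw [if_neg h]
        have h0 : pderiv ((z : Fin n), kc) (P σ) = 0 := by
          apply key_not
          intro j hj
          have h1 : σ j = z := congrArg Prod.fst hj
          have h2 : r.succAbove j = kc := congrArg Prod.snd hj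
          apply h
          rw [← h2]
          congr 1
          exact ((Equiv.symm_apply_eq σ).mpr h1.symm).symm
        rw [h0, mul_zero]
    rw [Finset.sum_congr rfl fun kc _ => hterm kc, Finset.sum_ite_eq' (Finset.univ.erase i)]
    simp [Finset.mem_erase]
  have hrow : (∑ kc ∈ Finset.univ.erase i,
        X (((z : Fin n), kc)) * pderiv ((z : Fin n), kc) (Fm k n r))
      = ∑ σ : Equiv.Perm (Fin n), ((Equiv.Perm.sign σ : ℤ)) •
          (if r.succAbove (σ.symm z) ≠ i then P σ else 0) := by
    simp only [hA]
    rw [Finset.sum_comm]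
    exact Finset.sum_congr rfl fun σ _ => by rw [← Finset.smul_sum, hrowσ σ]
  by_cases hri : r = i
  · subst hri
    rw [if_pos rfl]
    congr 1
    have hcol : ∀ l : Fin n, pderiv ((l, r)) (Fm k n r) = 0 := by
      intro l
      rw [hdet, map_sum]
      refine Finset.sum_eq_zero fun σ _ => ?_
      rw [map_zsmul]
      have h0 : pderiv ((l, r)) (P σ) = 0 := by
        apply key_not
        intro j hj
        exact Fin.succAbove_ne r j (congrArg Prod.snd hj)
      rw [h0, smul_zero]
    have hcolsum : (∑ l ∈ Finset.univ.filter (fun l : Fin n => (l : ℕ) ≠ 0),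
        X ((l, r)) * pderiv ((l, r)) (Fm k n r)) = 0 := by
      refine Finset.sum_eq_zero fun l _ => ?_
      rw [hcol l, mul_zero]
    rw [hcolsum, sub_zero, hrow]
    rw [hdet]
    refine Finset.sum_congr rfl fun σ _ => ?_
    rw [if_pos (Fin.succAbove_ne r (σ.symm z))]
  · rw [if_neg hri]
    obtain ⟨j0, hj0⟩ := Fin.exists_succAbove_eq (Ne.symm hri)
    have hcolσ : ∀ σ : Equiv.Perm (Fin n),
        (∑ l ∈ Finset.univ.filter (fun l : Fin n => (l : ℕ) ≠ 0),
            X ((l, i)) * pderiv ((l, i)) (P σ))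
          = if r.succAbove (σ.symm z) ≠ i then P σ else 0 := by
      intro σ
      have hterm : ∀ l : Fin n,
          X ((l, i)) * pderiv ((l, i)) (P σ) = if l = σ j0 then P σ else 0 := by
        intro l
        by_cases h : l = σ j0
        · rw [if_pos h, h]
          have := key_mem (k := k)
            (fun j : Fin n => ((σ j, r.succAbove j) : Fin n × Fin (n + 1))) (hvinj σ) j0
          simpa only [hj0] using this
        · rw [if_neg h]
          have h0 : pderiv ((l, i)) (P σ) = 0 := by
            apply key_not
            intro j hj
            have h1 : σ j = l := congrArg Prod.fst hj
            have h2 : r.succAbove j = i := congrArg Prod.snd hj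
            have h3 : j = j0 := Fin.succAbove_right_injective (h2.trans hj0.symm)
            exact h (h1.symm.trans (by rw [h3]))
          rw [h0, mul_zero]
      rw [Finset.sum_congr rfl fun l _ => hterm l,
        Finset.sum_ite_eq' (Finset.univ.filter (fun l : Fin n => (l : ℕ) ≠ 0))]
      have hiff : ((σ j0 : ℕ) ≠ 0) ↔ (r.succAbove (σ.symm z) ≠ i) := by
        constructor
        · intro hne hcontra
          have : σ.symm z = j0 := Fin.succAbove_right_injective (hcontra.trans hj0.symm)
          apply hne
          rw [← this, Equiv.apply_symm_apply]
        · intro hne hcontra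
          apply hne
          have : σ j0 = z := Fin.ext hcontra
          rw [← hj0]
          congr 1
          exact (Equiv.symm_apply_eq σ).mpr this.symm
      by_cases hc : (σ j0 : ℕ) ≠ 0
      · have hmem : σ j0 ∈ Finset.univ.filter (fun l : Fin n => (l : ℕ) ≠ 0) :=
          Finset.mem_filter.mpr ⟨Finset.mem_univ _, hc⟩
        rw [if_pos hmem, if_pos (hiff.mp hc)]
      · have hmem : σ j0 ∉ Finset.univ.filter (fun l : Fin n => (l : ℕ) ≠ 0) :=
          fun hmem => hc (Finset.mem_filter.mp hmem).2
        rw [if_neg hmem, if_neg (fun hne => hc (hiff.mpr hne))]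
    have hcol : (∑ l ∈ Finset.univ.filter (fun l : Fin n => (l : ℕ) ≠ 0),
          X ((l, i)) * pderiv ((l, i)) (Fm k n r))
        = ∑ σ : Equiv.Perm (Fin n), ((Equiv.Perm.sign σ : ℤ)) •
            (if r.succAbove (σ.symm z) ≠ i then P σ else 0) := by
      simp only [hA]
      rw [Finset.sum_comm]
      exact Finset.sum_congr rfl fun σ _ => by rw [← Finset.smul_sum, hcolσ σ]
    rw [hrow, hcol, sub_self, mul_zero]
end
end
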